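/- Let W₁, W₂ be n×n nonnegative matrices each of whose rows sums to at most 1 (row-substochastic), and let Ψ₁, Ψ₂ be p×p matrices with ‖Ψ₁‖_∞ + ‖Ψ₂‖_∞ < 1, where ‖·‖_∞ is the maximum absolute row sum norm. Then the spectral radius of Ψ₁^T ⊗ W₁ + Ψ₂^T ⊗ W₂ is strictly less than 1, so I_{np} - Ψ₁^T ⊗ W₁ - Ψ₂^T ⊗ W₂ is invertible. -/

import Mathlib

/-!
Write an eigenvector of `Ψ₁ᵀ ⊗ W₁ + Ψ₂ᵀ ⊗ W₂` as `vec X`. Since `(Aᵀ ⊗ B) vec X = vec (B X A)`,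
the eigenvalue equation becomes `z X = W₁ X Ψ₁ + W₂ X Ψ₂`, and taking maximum absolute row sum
norms (which are submultiplicative) gives `|z| ≤ ‖Ψ₁‖_∞ ‖W₁‖_∞ + ‖Ψ₂‖_∞ ‖W₂‖_∞ < 1`.
-/

open Matrix Kronecker

namespace Matrix

variable {ι κ 𝕜 : Type*} [Fintype ι] [Fintype κ]

theorem exists_mulVec_eq_smul_of_mem_spectrum [Field 𝕜] [DecidableEq ι] {M : Matrix ι ι 𝕜}
    {z : 𝕜} (hz : z ∈ spectrum 𝕜 M) : ∃ x ≠ 0, M *ᵥ x = z • x := by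
  rw [spectrum.mem_iff, isUnit_iff_isUnit_det, isUnit_iff_ne_zero, not_not,
    ← exists_mulVec_eq_zero_iff] at hz
  obtain ⟨x, hx, hzx⟩ := hz
  refine ⟨x, hx, ?_⟩
  rwa [sub_mulVec, Algebra.algebraMap_eq_smul_one, smul_mulVec, one_mulVec, sub_eq_zero,
    eq_comm] at hzx

theorem isUnit_of_isUnit_map {K L : Type*} [Field K] [CommRing L] [Nontrivial L] [DecidableEq ι]
    (f : K →+* L) {A : Matrix ι ι K} (h : IsUnit (A.map f)) : IsUnit A := by
  rw [isUnit_iff_isUnit_det] at h ⊢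
  rw [← RingHom.mapMatrix_apply, ← RingHom.map_det] at h
  exact isUnit_iff_ne_zero.2 fun h0 => by simp [h0] at h

theorem notMem_spectrum_of_notMem_spectrum_map {K L : Type*} [Field K] [CommRing L] [Nontrivial L]
    [DecidableEq ι] (f : K →+* L) {A : Matrix ι ι K} {r : K}
    (h : f r ∉ spectrum L (A.map f)) : r ∉ spectrum K A := by
  rw [spectrum.notMem_iff] at h ⊢
  refine isUnit_of_isUnit_map f ?_
  convert h using 1
  ext i j
  simp [algebraMap_matrix_apply, apply_ite f]

section LinftyOpNorm

attribute [local instance] Matrix.linftyOpNormedAddCommGroup Matrix.linftyOpNormedSpace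

theorem linfty_opNorm_le_of_forall_sum_le [NormedField 𝕜] [Nonempty ι] {A : Matrix ι κ 𝕜}
    {c : ℝ} (h : ∀ i, ∑ j, ‖A i j‖ ≤ c) : ‖A‖ ≤ c := by
  obtain ⟨i₀⟩ := ‹Nonempty ι›
  lift c to NNReal using (Finset.sum_nonneg fun j _ => norm_nonneg _).trans (h i₀)
  rw [linfty_opNorm_def, NNReal.coe_le_coe]
  exact Finset.sup_le fun i _ => by rw [← NNReal.coe_le_coe, NNReal.coe_sum]; exact h i

theorem norm_le_of_mem_spectrum_kronecker_add [NormedField 𝕜] [DecidableEq ι] [DecidableEq κ]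
    {A₁ A₂ : Matrix ι ι 𝕜} {B₁ B₂ : Matrix κ κ 𝕜} {a₁ a₂ b₁ b₂ : ℝ}
    (hA₁ : ∀ i, ∑ j, ‖A₁ i j‖ ≤ a₁) (hA₂ : ∀ i, ∑ j, ‖A₂ i j‖ ≤ a₂)
    (hB₁ : ∀ i, ∑ j, ‖B₁ i j‖ ≤ b₁) (hB₂ : ∀ i, ∑ j, ‖B₂ i j‖ ≤ b₂)
    {z : 𝕜} (hz : z ∈ spectrum 𝕜 (A₁ᵀ ⊗ₖ B₁ + A₂ᵀ ⊗ₖ B₂)) :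
    ‖z‖ ≤ a₁ * b₁ + a₂ * b₂ := by
  obtain ⟨x, hx, hzx⟩ := exists_mulVec_eq_smul_of_mem_spectrum hz
  obtain ⟨X, rfl⟩ := vec_bijective.2 x
  have hX : z • X = B₁ * X * A₁ + B₂ * X * A₂ := by
    rw [← vec_inj, vec_smul, vec_add, ← hzx, add_mulVec, kronecker_mulVec_vec,
      kronecker_mulVec_vec, transpose_transpose, transpose_transpose]
  -- the row-sum bounds control `‖Aᵢ‖` and `‖Bᵢ‖` only over nonempty index types
  obtain ⟨⟨i, k⟩, -⟩ := Function.ne_iff.1 hx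
  have : Nonempty ι := ⟨i⟩
  have : Nonempty κ := ⟨k⟩
  have hXpos : 0 < ‖X‖ := norm_pos_iff.2 fun h => hx (by rw [h, vec_zero])
  have hb₁ : 0 ≤ b₁ := (norm_nonneg _).trans (linfty_opNorm_le_of_forall_sum_le hB₁)
  have hb₂ : 0 ≤ b₂ := (norm_nonneg _).trans (linfty_opNorm_le_of_forall_sum_le hB₂)
  refine le_of_mul_le_mul_right ?_ hXpos
  calc ‖z‖ * ‖X‖ = ‖B₁ * X * A₁ + B₂ * X * A₂‖ := by rw [← norm_smul, hX]
    _ ≤ ‖B₁‖ * ‖X‖ * ‖A₁‖ + ‖B₂‖ * ‖X‖ * ‖A₂‖ := by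
      refine norm_add_le_of_le ?_ ?_ <;>
        exact (linfty_opNorm_mul _ _).trans (by gcongr; exact linfty_opNorm_mul _ _)
    _ ≤ b₁ * ‖X‖ * a₁ + b₂ * ‖X‖ * a₂ := by
      gcongr <;> exact linfty_opNorm_le_of_forall_sum_le ‹_›
    _ = (a₁ * b₁ + a₂ * b₂) * ‖X‖ := by ring

end LinftyOpNorm

end Matrix

theorem spectralRadius_le_of_forall_norm_le {𝕜 A : Type*} [NormedField 𝕜] [Ring A] [Algebra 𝕜 A]
    {a : A} {c : ℝ} (h : ∀ z ∈ spectrum 𝕜 a, ‖z‖ ≤ c) : spectralRadius 𝕜 a ≤ ENNReal.ofReal c :=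
  iSup₂_le fun z hz => (ofReal_norm z).symm.trans_le (ENNReal.ofReal_le_ofReal (h z hz))

/-- If `W₁, W₂` are row-substochastic (entries in `[0,1]`, row sums `≤ 1`) and the maximum
absolute row sums of `Ψ₁` and `Ψ₂` add up to less than `1`, then the spectral radius of
`Ψ₁ᵀ ⊗ W₁ + Ψ₂ᵀ ⊗ W₂` is strictly less than `1` and `I - Ψ₁ᵀ ⊗ W₁ - Ψ₂ᵀ ⊗ W₂` is
invertible. -/
theorem spectralRadius_lt_one_of_substochastic
    (n p : ℕ) (W1 W2 : Matrix (Fin n) (Fin n) ℝ)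
    (hW1e : ∀ i j, 0 ≤ W1 i j ∧ W1 i j ≤ 1) (hW2e : ∀ i j, 0 ≤ W2 i j ∧ W2 i j ≤ 1)
    (hW1r : ∀ i, ∑ j, W1 i j ≤ 1) (hW2r : ∀ i, ∑ j, W2 i j ≤ 1)
    (P1 P2 : Matrix (Fin p) (Fin p) ℝ)
    (a b : ℝ)
    (hP1 : ∀ i, ∑ j, |P1 i j| ≤ a) (hP2 : ∀ i, ∑ j, |P2 i j| ≤ b)
    (hab : a + b < 1) :
    spectralRadius ℂ ((P1ᵀ ⊗ₖ W1 + P2ᵀ ⊗ₖ W2).map Complex.ofReal) < 1 ∧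
    IsUnit ((1 : Matrix (Fin p × Fin n) (Fin p × Fin n) ℝ) - P1ᵀ ⊗ₖ W1 - P2ᵀ ⊗ₖ W2) := by
  set M := P1ᵀ ⊗ₖ W1 + P2ᵀ ⊗ₖ W2
  have hMℂ : M.map Complex.ofReal = (P1.map Complex.ofReal)ᵀ ⊗ₖ W1.map Complex.ofReal +
      (P2.map Complex.ofReal)ᵀ ⊗ₖ W2.map Complex.ofReal := by
    ext; simp [M]
  have hspec : ∀ z ∈ spectrum ℂ (M.map Complex.ofReal), ‖z‖ ≤ a + b := fun z hz => by
    simpa using norm_le_of_mem_spectrum_kronecker_add (b₁ := 1) (b₂ := 1)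
      (by simpa using hP1) (by simpa using hP2)
      (fun i => by simpa [abs_of_nonneg (hW1e i _).1] using hW1r i)
      (fun i => by simpa [abs_of_nonneg (hW2e i _).1] using hW2r i) (hMℂ ▸ hz)
  refine ⟨(spectralRadius_le_of_forall_norm_le hspec).trans_lt (ENNReal.ofReal_lt_one.2 hab), ?_⟩
  have h1 : (1 : ℝ) ∉ spectrum ℝ M := notMem_spectrum_of_notMem_spectrum_map Complex.ofRealHom
    fun h => by linarith [norm_one (α := ℂ) ▸ hspec 1 h]
  simpa [sub_sub, spectrum.notMem_iff] using h1
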